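/- Let l ∈ ℕ ∪ {∞}, let H⃗ and G⃗ be directed acyclic hypergraphs, let T be a DAG-tree decomposition of the l-skeleton Sk_l(H⃗), and let B be a node of T. Fix a DAH homomorphism φ from H⃗[B]_l to G⃗, and for every child B′ of B in T let φ_{B′} be the restriction of φ to Reach_{H⃗,l}(B) ∩ Reach_{H⃗,l}(Γ(B′)). Then ext(φ, H⃗[Γ(B)]_l, G⃗) = Π_{B′ child of B} ext(φ_{B′}, H⃗[Γ(B′)]_l, G⃗). -/

import Mathlib

open scoped Classical

noncomputable section

/-- A hypergraph: a finite vertex set and a finite set of hyperedges, with vertices in `ℕ`. -/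
structure Hypergraph' where
  verts : Finset ℕ
  edges : Finset (Finset ℕ)

namespace Hypergraph'

/-- Well-formedness: every hyperedge is a nonempty subset of the vertex set. -/
def Good (G : Hypergraph') : Prop := ∀ e ∈ G.edges, e ⊆ G.verts ∧ e.Nonempty

/-- The rank of a hypergraph: the maximum arity of a hyperedge. -/
def rank (G : Hypergraph') : ℕ := G.edges.sup Finset.card

/-- The induced `l`-trimmed subhypergraph of `G` on `S`. -/
def trim (G : Hypergraph') (S : Finset ℕ) (l : ℕ∞) : Hypergraph' :=
  ⟨G.verts ∩ S,
    (G.edges.filter fun e => ((e \ S).card : ℕ∞) ≤ l ∧ (e ∩ S).Nonempty).image fun e => e ∩ S⟩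

/-- The degree of a vertex: the number of hyperedges containing it. -/
def degree (G : Hypergraph') (v : ℕ) : ℕ := (G.edges.filter fun e => v ∈ e).card

/-- The `l`-degeneracy of a hypergraph: the least `κ` such that every nonempty induced
`l`-trimmed subhypergraph has a vertex of degree at most `κ`. -/
def degeneracy (G : Hypergraph') (l : ℕ∞) : ℕ :=
  sInf {κ : ℕ | ∀ S ⊆ G.verts, S.Nonempty → ∃ v ∈ S, (G.trim S l).degree v ≤ κ}

/-- Two vertices are adjacent if some hyperedge contains both. -/
def Adj (G : Hypergraph') (u v : ℕ) : Prop := ∃ e ∈ G.edges, u ∈ e ∧ v ∈ e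

/-- A hypergraph is connected if any two vertices are joined by a path of adjacencies. -/
def Connected (G : Hypergraph') : Prop :=
  ∀ u ∈ G.verts, ∀ v ∈ G.verts, Relation.ReflTransGen G.Adj u v

/-- `D` is a connected component of `G`. -/
def IsComponent (G : Hypergraph') (D : Finset ℕ) : Prop :=
  ∃ v ∈ G.verts, D = G.verts.filter fun u => Relation.ReflTransGen G.Adj v u

/-- The induced subhypergraph (only hyperedges entirely inside `S`). -/
def induce (G : Hypergraph') (S : Finset ℕ) : Hypergraph' :=
  ⟨G.verts ∩ S, G.edges.filter fun e => e ⊆ S⟩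

end Hypergraph'

/-- `f` is a homomorphism from `H` to `G`. -/
def IsHom (H G : Hypergraph') (f : ℕ → ℕ) : Prop :=
  (∀ v ∈ H.verts, f v ∈ G.verts) ∧ ∀ e ∈ H.edges, e.image f ∈ G.edges

/-- `Hom(G,H)`: the number of homomorphisms from `H` to `G`
(normalized to be `0` off `V(H)` so that the set is finite). -/
def homCount (G H : Hypergraph') : ℕ :=
  Set.ncard {f : ℕ → ℕ | IsHom H G f ∧ ∀ v ∉ H.verts, f v = 0}

/-- `Homr(G,H)`: the number of arity-preserving homomorphisms from `H` to `G`. -/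
def homrCount (G H : Hypergraph') : ℕ :=
  Set.ncard {f : ℕ → ℕ | IsHom H G f ∧ (∀ e ∈ H.edges, (e.image f).card = e.card) ∧
    ∀ v ∉ H.verts, f v = 0}

/-- Hypergraph' isomorphism. -/
def Isomorphic (H H' : Hypergraph') : Prop :=
  ∃ f : ℕ → ℕ, Set.BijOn f ↑H.verts ↑H'.verts ∧
    H'.edges = H.edges.image fun e => e.image f

/-- The quotient of `H` under the partition of `V(H)` into the fibers of `f`. -/
def quotientBy (H : Hypergraph') (f : ℕ → ℕ) : Hypergraph' :=
  ⟨H.verts.image f, H.edges.image fun e => e.image f⟩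

/-- `H'` is a quotient of `H` (by some partition of `V(H)`). -/
def IsQuotient (H H' : Hypergraph') : Prop := ∃ f : ℕ → ℕ, H' = quotientBy H f

/-- Each fiber of `f` induces a connected (trimmed) subhypergraph of `H`. -/
def ContractMap (H : Hypergraph') (f : ℕ → ℕ) : Prop :=
  ∀ w : ℕ, (H.trim (H.verts.filter fun v => f v = w) ⊤).Connected

/-- `H'` belongs to the contract set `Q^c(H)`: it is a quotient of `H` by a partition
all of whose parts induce connected subhypergraphs of `H`. -/
def IsContractQuotient (H H' : Hypergraph') : Prop :=
  ∃ f : ℕ → ℕ, ContractMap H f ∧ H' = quotientBy H f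

/-- `α(H')`: the number of partitions `τ` of `V(H)` with connected parts with `H/τ ≅ H'`. -/
def alphaCount (H H' : Hypergraph') : ℕ :=
  Set.ncard {P : Finset (Finset ℕ) | ∃ f : ℕ → ℕ, ContractMap H f ∧
    Isomorphic (quotientBy H f) H' ∧
    P = (H.verts.image f).image fun w => H.verts.filter fun v => f v = w}

/-- `|Aut(H')|`: the number of automorphisms of `H'`. -/
def autCount (H' : Hypergraph') : ℕ :=
  Set.ncard {f : ℕ → ℕ | (∀ v ∉ H'.verts, f v = v) ∧ Set.BijOn f ↑H'.verts ↑H'.verts ∧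
    H'.edges.image (fun e => e.image f) = H'.edges}

/-- The arc relation of the `l`-skeleton of the DAH obtained by ordering `G` by `π`. -/
def SkelArc (G : Hypergraph') (π : ℕ → ℕ) (l : ℕ∞) (u v : ℕ) : Prop :=
  ∃ e ∈ G.edges, u ∈ e ∧ v ∈ e ∧ π u < π v ∧
    ((e.filter fun w => π w < π u).card : ℕ∞) ≤ l

/-- The `l`-outdegree of a vertex in the DAH `(G, π)`. -/
def loutdeg (G : Hypergraph') (π : ℕ → ℕ) (l : ℕ∞) (u : ℕ) : ℕ :=
  (G.verts.filter fun v => SkelArc G π l u v).card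

/-- Vertices reachable from `v` by a directed path. -/
def Reach (Adj : ℕ → ℕ → Prop) (v : ℕ) : Set ℕ := {u | Relation.ReflTransGen Adj v u}

/-- Vertices reachable from a set `A`. -/
def ReachSet (Adj : ℕ → ℕ → Prop) (A : Set ℕ) : Set ℕ :=
  {u | ∃ a ∈ A, Relation.ReflTransGen Adj a u}

/-- The sources of a DAG: vertices with no incoming arc. -/
def sourcesOf (V : Finset ℕ) (Adj : ℕ → ℕ → Prop) : Finset ℕ :=
  V.filter fun v => ¬ ∃ u ∈ V, Adj u v

/-- `b` lies on the (unique) path between `i` and `j` in `T`. -/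
def OnPath {n : ℕ} (T : SimpleGraph (Fin n)) (i j b : Fin n) : Prop :=
  ∃ p : T.Walk i j, p.IsPath ∧ b ∈ p.support

/-- `(T, β)` is a DAG-tree decomposition of the DAG `(V, Adj)`. -/
def IsDTD (V : Finset ℕ) (Adj : ℕ → ℕ → Prop) {n : ℕ}
    (T : SimpleGraph (Fin n)) (β : Fin n → Finset ℕ) : Prop :=
  T.IsTree ∧ (∀ i, β i ⊆ sourcesOf V Adj) ∧ (∀ s ∈ sourcesOf V Adj, ∃ i, s ∈ β i) ∧
    ∀ i j b, OnPath T i j b →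
      ReachSet Adj ↑(β i) ∩ ReachSet Adj ↑(β j) ⊆ ReachSet Adj ↑(β b)

/-- The DAG-treewidth of the DAG `(V, Adj)`. -/
def dagTreewidth (V : Finset ℕ) (Adj : ℕ → ℕ → Prop) : ℕ :=
  sInf {w : ℕ | ∃ (n : ℕ) (T : SimpleGraph (Fin n)) (β : Fin n → Finset ℕ),
    IsDTD V Adj T β ∧ ∀ i, (β i).card ≤ w}

/-- The `l`-DAG-treewidth of the DAH `(H, π)`. -/
def ldtwOriented (H : Hypergraph') (π : ℕ → ℕ) (l : ℕ∞) : ℕ :=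
  dagTreewidth H.verts (SkelArc H π l)

/-- The `l`-DAG-treewidth of an undirected hypergraph:
the maximum over all acyclic orientations. -/
def ldtw (H : Hypergraph') (l : ℕ∞) : ℕ :=
  sSup {w : ℕ | ∃ π : ℕ → ℕ, Set.InjOn π ↑H.verts ∧ w = ldtwOriented H π l}

/-- `f` is a DAH homomorphism from `(K, πK)` to `(G, πG)`. -/
def IsDAHHom (K : Hypergraph') (πK : ℕ → ℕ) (G : Hypergraph') (πG : ℕ → ℕ)
    (f : ℕ → ℕ) : Prop :=
  (∀ v ∈ K.verts, f v ∈ G.verts) ∧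
    ∀ e ∈ K.edges, e.image f ∈ G.edges ∧
      ∀ u ∈ e, ∀ v ∈ e, πK u < πK v → πG (f u) < πG (f v)

/-- The number of DAH homomorphisms from `(K, πK)` to `(G, πG)`. -/
def dahHomCount (G : Hypergraph') (πG : ℕ → ℕ) (K : Hypergraph') (πK : ℕ → ℕ) : ℕ :=
  Set.ncard {f : ℕ → ℕ | IsDAHHom K πK G πG f ∧ ∀ v ∉ K.verts, f v = 0}

/-- Two orderings of `H` give isomorphic acyclic orientations. -/
def OrientIso (H : Hypergraph') (π₁ π₂ : ℕ → ℕ) : Prop :=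
  ∃ g : ℕ → ℕ, Set.BijOn g ↑H.verts ↑H.verts ∧
    (H.edges.image fun e => e.image g) = H.edges ∧
    ∀ u ∈ H.verts, ∀ v ∈ H.verts, (π₁ u < π₁ v ↔ π₂ (g u) < π₂ (g v))

/-- The vertices of `H` that are `l`-reachable from the set `S` in the DAH `(H, π)`. -/
def reachClosure (H : Hypergraph') (π : ℕ → ℕ) (l : ℕ∞) (S : Set ℕ) : Finset ℕ :=
  H.verts.filter fun v => v ∈ ReachSet (SkelArc H π l) S

/-- `H⃗[S]_l`: the sub-DAH induced (0-trimmed) on the vertices `l`-reachable from `S`. -/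
def subDAH (H : Hypergraph') (π : ℕ → ℕ) (l : ℕ∞) (S : Set ℕ) : Hypergraph' :=
  H.trim (reachClosure H π l S) 0

/-- `B'` is a child of `B` in the tree `T` rooted at `root`. -/
def IsChild {n : ℕ} (T : SimpleGraph (Fin n)) (root B B' : Fin n) : Prop :=
  T.Adj B B' ∧ OnPath T root B' B

/-- `Γ(B)`: the union of the bags in the subtree of `T` rooted at `B`. -/
def GammaSet {n : ℕ} (T : SimpleGraph (Fin n)) (root : Fin n)
    (β : Fin n → Finset ℕ) (B : Fin n) : Set ℕ :=
  {s | ∃ i, OnPath T root i B ∧ s ∈ β i}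

/-- `ext(φ, K⃗, G⃗)` relative to the agreement domain `dom`: the number of DAH homomorphisms
from `(K, πK)` to `(G, πG)` that agree with `φ` on `V(K) ∩ dom`. -/
def extCount (K : Hypergraph') (πK : ℕ → ℕ) (G : Hypergraph') (πG : ℕ → ℕ)
    (dom : Set ℕ) (φ : ℕ → ℕ) : ℕ :=
  Set.ncard {ψ : ℕ → ℕ | IsDAHHom K πK G πG ψ ∧ (∀ v ∉ K.verts, ψ v = 0) ∧
    ∀ v ∈ (↑K.verts : Set ℕ) ∩ dom, ψ v = φ v}

/-- The hyperedges `E_i` associated to a core `C` and a component `D`. -/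
def obstructionEdges (H : Hypergraph') (C D : Finset ℕ) : Finset (Finset ℕ) :=
  H.edges.filter fun e => e ⊆ C ∪ D ∧ 1 < e.card

/-- `H` is an `l`-obstruction (a member of `𝓗_l`). -/
def IsLObstruction (l : ℕ∞) (H : Hypergraph') : Prop :=
  ∃ k, 3 ≤ k ∧ ∃ C ⊆ H.verts, C.card = k ∧
    (∀ e ∈ (H.trim C l).edges, e.card ≤ 1) ∧
    (∀ D : Finset ℕ, (H.trim (H.verts \ C) ⊤).IsComponent D →
      ¬ C ⊆ (obstructionEdges H C D).biUnion id) ∧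
    ∃ Dmap : ℕ → Finset ℕ, Set.InjOn Dmap ↑C ∧
      ∀ c ∈ C, (H.trim (H.verts \ C) ⊤).IsComponent (Dmap c) ∧
        C.erase c ⊆ (obstructionEdges H C (Dmap c)).biUnion id ∧
        ∀ e ∈ obstructionEdges H C (Dmap c), c ∉ e

/-- `H` is `𝓗_l` ITS free: no induced ∞-trimmed subhypergraph is an `l`-obstruction. -/
def ITSFree (l : ℕ∞) (H : Hypergraph') : Prop :=
  ∀ S ⊆ H.verts, ¬ IsLObstruction l (H.trim S ⊤)

/-- The hypergraph `(Hv, He)` is an `l`-connector of `X ⊆ Hv`. -/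
def IsConnector (l : ℕ∞) (Hv : Finset ℕ) (He : Finset (Finset ℕ)) (X : Finset ℕ) : Prop :=
  X ⊆ Hv ∧ Hypergraph'.Connected ⟨Hv, He⟩ ∧
    (∀ e ∈ He, 2 ≤ (e ∩ X).card → l < ((e \ X).card : ℕ∞)) ∧
    ∃ V' : Finset ℕ, (Hypergraph'.trim ⟨Hv, He⟩ (Hv \ X) ⊤).IsComponent V' ∧
      ∀ xx ∈ X, ∃ v ∈ V', ∃ e ∈ He, xx ∈ e ∧ v ∈ e

/-- Witness data for membership of `H` in `𝓗_{l,k}`. -/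
def InHlkWitness (l : ℕ∞) (k : ℕ) (H : Hypergraph')
    (x : ℕ → ℕ) (Vp : ℕ → Finset ℕ) (Ep : ℕ → Finset (Finset ℕ)) : Prop :=
  Set.InjOn x ↑(Finset.range k) ∧
  (∀ i < k, ∀ j < k, i ≠ j → Disjoint (Vp i) (Vp j)) ∧
  (∀ i < k, Disjoint (Vp i) ((Finset.range k).image x)) ∧
  H.verts = (Finset.range k).image x ∪ (Finset.range k).biUnion Vp ∧
  (∀ i < k, ∀ j < k, i ≠ j → Disjoint (Ep i) (Ep j)) ∧
  H.edges = (Finset.range k).biUnion Ep ∧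
  ∀ i < k,
    (∀ e ∈ Ep i, e ⊆ Vp i ∪ (((Finset.range k).image x).erase (x i))) ∧
    IsConnector l (Vp i ∪ (((Finset.range k).image x).erase (x i))) (Ep i)
      (((Finset.range k).image x).erase (x i))

/-- `H ∈ 𝓗_{l,k}`. -/
def InHlk (l : ℕ∞) (k : ℕ) (H : Hypergraph') : Prop :=
  ∃ x Vp Ep, InHlkWitness l k H x Vp Ep

/-- The DAG `(V, Adj)` contains a `k`-reachable-cycle. -/
def HasReachCycle (V : Finset ℕ) (Adj : ℕ → ℕ → Prop) (k : ℕ) : Prop :=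
  ∃ x y : ZMod k → ℕ, Function.Injective x ∧ Function.Injective y ∧
    (∀ i, x i ∈ V) ∧ (∀ i, y i ∈ V) ∧
    (∀ i, x i ∈ Reach Adj (y i) ∧ x (i + 1) ∈ Reach Adj (y i)) ∧
    ∀ v ∈ V, 2 ≤ (Set.range x ∩ Reach Adj v).ncard →
      ∃ i, Set.range x ∩ Reach Adj v = {x i, x (i + 1)}

/-- `(x, y)` form a `k`-reachable-simplex in the DAG `(V, Adj)`. -/
def IsReachSimplexPair (V : Finset ℕ) (Adj : ℕ → ℕ → Prop) {k : ℕ}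
    (x y : Fin k → ℕ) : Prop :=
  Function.Injective x ∧ Function.Injective y ∧
    (∀ i, x i ∈ V) ∧ (∀ i, y i ∈ V) ∧
    (∀ i j, j ≠ i → x j ∈ Reach Adj (y i)) ∧
    ¬ ∃ v ∈ V, ∀ i, x i ∈ Reach Adj v

/-- The DAG `(V, Adj)` contains a `k`-reachable-simplex. -/
def HasReachSimplex (V : Finset ℕ) (Adj : ℕ → ℕ → Prop) (k : ℕ) : Prop :=
  ∃ x y : Fin k → ℕ, IsReachSimplexPair V Adj x y

/-- `F` is α-acyclic. -/
def IsAlphaAcyclic (F : Hypergraph') : Prop :=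
  ∃ (n : ℕ) (T : SimpleGraph (Fin n)) (f : Fin n → Finset ℕ),
    T.IsTree ∧ Function.Injective f ∧ (∀ i, f i ∈ F.edges) ∧
    (∀ e ∈ F.edges, ∃ i, f i = e) ∧
    ∀ i j b, OnPath T i j b → f i ∩ f j ⊆ f b

/-- The reachability hypergraph of the DAG `(V, Adj)`. -/
def reachHypergraph (V : Finset ℕ) (Adj : ℕ → ℕ → Prop) : Hypergraph' :=
  ⟨V, (sourcesOf V Adj).image fun s => V.filter fun v => v ∈ Reach Adj s⟩

/-- The clique completion of a hypergraph. -/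
def cliqueCompletion (H : Hypergraph') : SimpleGraph ℕ where
  Adj u v := u ≠ v ∧ ∃ e ∈ H.edges, u ∈ e ∧ v ∈ e
  symm := by
    constructor
    intro u v h
    obtain ⟨huv, e, he, hu, hv⟩ := h
    exact ⟨huv.symm, e, he, hv, hu⟩
  loopless := by
    constructor
    intro u h
    exact h.1 rfl

/-- `G` has an induced cycle on `n` vertices. -/
def HasInducedCycle (G : SimpleGraph ℕ) (n : ℕ) : Prop :=
  ∃ f : ZMod n → ℕ, Function.Injective f ∧
    ∀ i j : ZMod n, G.Adj (f i) (f j) ↔ (j = i + 1 ∨ i = j + 1)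

/-- The number of colorful homomorphisms from `H` to `G` under the coloring `c`
(with color set `{1, …, |V(H)|}`). -/
def colHomCount (G H : Hypergraph') (c : ℕ → ℕ) : ℕ :=
  Set.ncard {f : ℕ → ℕ | IsHom H G f ∧ (∀ v ∉ H.verts, f v = 0) ∧
    Set.BijOn (fun v => c (f v)) ↑H.verts ↑(Finset.Icc 1 H.verts.card)}

/-- The tensor product of hypergraphs (vertex pairs encoded by `Nat.pair`). -/
def tensor (G H : Hypergraph') : Hypergraph' :=
  ⟨(G.verts ×ˢ H.verts).image fun p => Nat.pair p.1 p.2,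
    ((G.verts ×ˢ H.verts).image fun p => Nat.pair p.1 p.2).powerset.filter fun e =>
      (e.image fun m => (Nat.unpair m).1) ∈ G.edges ∧
      (e.image fun m => (Nat.unpair m).2) ∈ H.edges⟩

/-- `Sub(G,H)`: the number of subhypergraphs of `G` isomorphic to `H`. -/
def subCount (G H : Hypergraph') : ℕ :=
  Set.ncard {p : Finset ℕ × Finset (Finset ℕ) |
    p.1 ⊆ G.verts ∧ (∀ e ∈ p.2, e ∈ G.edges ∧ e ⊆ p.1) ∧ Isomorphic H ⟨p.1, p.2⟩}

/-- Vertex renaming used in the construction of `G^H_l`: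
core vertices go to the matching vertex of the colorful hyperedge `e` of `G`,
vertices of `H'` outside the core go to their fresh copy indexed by `e`, and
vertices outside `H'` go to their unique copy. -/
def liftVert (S X : Finset ℕ) (π c : ℕ → ℕ) (e : Finset ℕ) (v : ℕ) : ℕ :=
  if v ∈ X then Nat.pair 0 ((e.filter fun u => c u = π v).sum id)
  else if v ∈ S then Nat.pair 2 (Nat.pair (Encodable.encode e) v)
  else Nat.pair 1 v

/-- The hypergraph `G^H_l` from the hardness construction. -/
def GHl (H G : Hypergraph') (S X : Finset ℕ) (Vp : ℕ → Finset ℕ) (π c : ℕ → ℕ)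
    (k : ℕ) : Hypergraph' :=
  ⟨(G.verts.image fun v => Nat.pair 0 v) ∪ ((H.verts \ S).image fun v => Nat.pair 1 v) ∪
      (Finset.range k).biUnion fun i =>
        (G.edges.filter fun e => e.card = k - 1 ∧ e.image c = (Finset.range k).erase i).biUnion
          fun e => (Vp i).image fun v => Nat.pair 2 (Nat.pair (Encodable.encode e) v),
    ((H.edges.filter fun e => e ⊆ H.verts \ S).image fun e => e.image fun v => Nat.pair 1 v) ∪
      (Finset.range k).biUnion fun i =>
        (G.edges.filter fun e => e.card = k - 1 ∧ e.image c = (Finset.range k).erase i).biUnion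
          fun e =>
            (H.edges.filter fun e' => ¬ e' ⊆ H.verts \ S ∧
                e' ⊆ X ∪ Vp i ∪ (H.verts \ S)).image
              fun e' => e'.image (liftVert S X π c e)⟩

/-- The coloring of `G^H_l`. -/
def GHlColor (π c : ℕ → ℕ) (m : ℕ) : ℕ :=
  if (Nat.unpair m).1 = 0 then c (Nat.unpair m).2
  else if (Nat.unpair m).1 = 1 then π (Nat.unpair m).2
  else π (Nat.unpair (Nat.unpair m).2).2

/-- The grouping of the vertices of `G^H_l`: copied vertices first,
then the vertices of `G`, then the vertices of `V^ext`. -/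
def GHlGroup (m : ℕ) : ℕ :=
  if (Nat.unpair m).1 = 2 then 0 else if (Nat.unpair m).1 = 0 then 1 else 2


/-! Every vertex of `H⃗[Γ(B)]_l` is reachable from a source in `B` or in `Γ(B')` for some
child `B'`, and a hyperedge is reachable as a whole from one source, since its first vertex
has a skeleton arc to all the others; so every hyperedge lies in `Reach(B)` or in one
`Reach(Γ(B'))`. Any tree path between the subtrees of two distinct children passes through
`B`, so the decomposition property gives `Reach(Γ(B'₁)) ∩ Reach(Γ(B'₂)) ⊆ Reach(B)`. Once `φ`
is fixed on `Reach(B)`, an extension to `H⃗[Γ(B)]_l` is therefore the same as an independent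
choice of extensions to the pieces `H⃗[Γ(B')]_l`, and the count factorises. -/

section RootedTree

open SimpleGraph

variable {n : ℕ} {T : SimpleGraph (Fin n)}

theorem onPath_iff_mem_support (hT : T.IsAcyclic) {i j b : Fin n} {p : T.Walk i j}
    (hp : p.IsPath) : OnPath T i j b ↔ b ∈ p.support := by
  refine ⟨fun ⟨q, hq, hb⟩ => ?_, fun hb => ⟨p, hp, hb⟩⟩
  have hqp : q = p := congrArg Subtype.val ((hT.subsingleton_path i j).elim ⟨q, hq⟩ ⟨p, hp⟩)
  exact hqp ▸ hb

theorem onPath_iff_dist (hT : T.IsTree) {i j b : Fin n} :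
    OnPath T i j b ↔ T.dist i b + T.dist b j = T.dist i j := by
  obtain ⟨p, hp, hlen⟩ := hT.connected.exists_path_of_dist i j
  constructor
  · intro hb
    obtain ⟨q, r, -, -, rfl⟩ :=
      hp.mem_support_iff_exists_append.mp ((onPath_iff_mem_support hT.isAcyclic hp).mp hb)
    have := hT.connected.dist_triangle (u := i) (v := b) (w := j)
    have := dist_le q
    have := dist_le r
    rw [Walk.length_append] at hlen
    omega
  · intro h
    obtain ⟨q, hq⟩ := hT.connected.exists_walk_length_eq_dist i b
    obtain ⟨r, hr⟩ := hT.connected.exists_walk_length_eq_dist b j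
    refine ⟨q.append r, (q.append r).isPath_of_length_eq_dist ?_, ?_⟩
    · rw [Walk.length_append]; omega
    · exact (Walk.mem_support_append_iff q r).mpr (Or.inr r.start_mem_support)

theorem IsChild.dist_eq (hT : T.IsTree) {root B c : Fin n} (hc : IsChild T root B c) :
    T.dist root c = T.dist root B + 1 := by
  rw [← (onPath_iff_dist hT).mp hc.2, dist_eq_one_iff_adj.mpr hc.1]

theorem OnPath.trans (hT : T.IsTree) {root i B c : Fin n} (hc : OnPath T root c B)
    (hi : OnPath T root i c) : OnPath T root i B := by
  rw [onPath_iff_dist hT] at *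
  have := hT.connected.dist_triangle (u := B) (v := c) (w := i)
  have := hT.connected.dist_triangle (u := root) (v := B) (w := i)
  omega

theorem exists_isChild_onPath (hT : T.IsTree) {root i B : Fin n} (hB : OnPath T root i B)
    (hne : i ≠ B) : ∃ c, IsChild T root B c ∧ OnPath T root i c := by
  obtain ⟨p, hp⟩ := hT.connected.exists_walk_length_eq_dist B i
  obtain ⟨c, hBc, q, rfl⟩ := Walk.exists_eq_cons_of_ne hne.symm p
  have hBc1 : T.dist B c = 1 := dist_eq_one_iff_adj.mpr hBc
  have := dist_le q
  have := hT.connected.dist_triangle (u := root) (v := B) (w := c)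
  have := hT.connected.dist_triangle (u := root) (v := c) (w := i)
  have := hT.connected.dist_triangle (u := B) (v := c) (w := i)
  rw [onPath_iff_dist hT] at hB
  rw [Walk.length_cons] at hp
  refine ⟨c, ⟨hBc, ?_⟩, ?_⟩ <;> rw [onPath_iff_dist hT] <;> omega

theorem IsChild.not_onPath (hT : T.IsTree) {root B c i : Fin n} (hc : IsChild T root B c)
    (hi : OnPath T root i c) : ¬ OnPath T c i B := by
  have hBc := hc.dist_eq hT
  have hBi := (onPath_iff_dist hT).mp (hc.2.trans hT hi)
  rw [onPath_iff_dist hT, dist_comm, dist_eq_one_iff_adj.mpr hc.1]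
  rw [onPath_iff_dist hT] at hi
  omega

theorem onPath_of_isChild_of_isChild (hT : T.IsTree) {root B c c' i j : Fin n}
    (hc : IsChild T root B c) (hc' : IsChild T root B c') (hne : c ≠ c')
    (hi : OnPath T root i c) (hj : OnPath T root j c') : OnPath T i j B := by
  -- `c` and `c'` are at the same depth, hence not adjacent, hence at distance two via `B`.
  have hcc' : OnPath T c c' B := by
    have hdc := hc.dist_eq hT
    have hdc' := hc'.dist_eq hT
    have hnadj : ¬ T.Adj c c' := fun h => hT.dist_ne_of_adj root h (by omega)
    have h0 : T.dist c c' ≠ 0 := fun h => hne ((hT.connected c c').dist_eq_zero_iff.mp h)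
    have h1 : T.dist c c' ≠ 1 := fun h => hnadj (dist_eq_one_iff_adj.mp h)
    have hcB : T.dist c B = 1 := dist_eq_one_iff_adj.mpr hc.1.symm
    have hBc' : T.dist B c' = 1 := dist_eq_one_iff_adj.mpr hc'.1
    have := hT.connected.dist_triangle (u := c) (v := B) (w := c')
    rw [onPath_iff_dist hT]
    omega
  by_contra hB
  obtain ⟨p, hp, -⟩ := hT.connected.exists_path_of_dist i j
  obtain ⟨q, hq, -⟩ := hT.connected.exists_path_of_dist c i
  obtain ⟨r, hr, -⟩ := hT.connected.exists_path_of_dist c' j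
  have hBp : B ∉ p.support := fun h => hB ⟨p, hp, h⟩
  have hBq : B ∉ q.support := fun h =>
    hc.not_onPath hT hi ((onPath_iff_mem_support hT.isAcyclic hq).mpr h)
  have hBr : B ∉ r.support := fun h =>
    hc'.not_onPath hT hj ((onPath_iff_mem_support hT.isAcyclic hr).mpr h)
  -- Otherwise `c → i → j → c'` would give a path from `c` to `c'` avoiding `B`.
  set w := q.append (p.append r.reverse)
  have hBw := (onPath_iff_mem_support hT.isAcyclic w.bypass_isPath).mp hcc'
  have := w.support_bypass_subset_support hBw
  simp only [w, Walk.mem_support_append_iff, Walk.support_reverse, List.mem_reverse] at this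
  tauto

end RootedTree

section SubtreeReach

variable {n : ℕ} {T : SimpleGraph (Fin n)} {root B c : Fin n} {β : Fin n → Finset ℕ}

theorem gammaSet_subset_of_isChild (hT : T.IsTree) (hc : IsChild T root B c) :
    GammaSet T root β c ⊆ GammaSet T root β B :=
  fun _ ⟨i, hi, hs⟩ => ⟨i, hc.2.trans hT hi, hs⟩

theorem mem_gammaSet_cases (hT : T.IsTree) {s : ℕ} (hs : s ∈ GammaSet T root β B) :
    s ∈ β B ∨ ∃ c, IsChild T root B c ∧ s ∈ GammaSet T root β c := by
  obtain ⟨i, hi, hs⟩ := hs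
  rcases eq_or_ne i B with rfl | hne
  · exact Or.inl hs
  · obtain ⟨c, hc, hic⟩ := exists_isChild_onPath hT hi hne
    exact Or.inr ⟨c, hc, i, hic, hs⟩

theorem reachSet_gammaSet_inter_subset {V : Finset ℕ} {Adj : ℕ → ℕ → Prop} {c' : Fin n}
    (hT : IsDTD V Adj T β) (hc : IsChild T root B c) (hc' : IsChild T root B c')
    (hne : c ≠ c') :
    ReachSet Adj (GammaSet T root β c) ∩ ReachSet Adj (GammaSet T root β c') ⊆
      ReachSet Adj ↑(β B) := by
  rintro v ⟨⟨s, ⟨i, hi, hs⟩, hsv⟩, ⟨s', ⟨j, hj, hs'⟩, hs'v⟩⟩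
  exact hT.2.2.2 i j B (onPath_of_isChild_of_isChild hT.1 hc hc' hne hi hj)
    ⟨⟨s, hs, hsv⟩, ⟨s', hs', hs'v⟩⟩

end SubtreeReach

@[ext]
theorem Hypergraph'.ext {G G' : Hypergraph'} (hv : G.verts = G'.verts)
    (he : G.edges = G'.edges) : G = G' := by
  cases G; cases G'; congr

theorem Hypergraph'.mem_trim_zero_edges {G : Hypergraph'} {S e : Finset ℕ} :
    e ∈ (G.trim S 0).edges ↔ e ∈ G.edges ∧ e ⊆ S ∧ e.Nonempty := by
  simp only [Hypergraph'.trim, Finset.mem_image, Finset.mem_filter, nonpos_iff_eq_zero,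
    Nat.cast_eq_zero, Finset.card_eq_zero, Finset.sdiff_eq_empty_iff_subset]
  constructor
  · rintro ⟨e, ⟨he, hsub, hne⟩, rfl⟩
    rw [Finset.inter_eq_left.mpr hsub] at hne ⊢
    exact ⟨he, hsub, hne⟩
  · rintro ⟨he, hsub, hne⟩
    exact ⟨e, ⟨he, hsub, by rwa [Finset.inter_eq_left.mpr hsub]⟩, Finset.inter_eq_left.mpr hsub⟩

section SubDAH

variable {H : Hypergraph'} {π : ℕ → ℕ} {l : ℕ∞} {S S' : Set ℕ}

theorem mem_reachClosure {v : ℕ} :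
    v ∈ reachClosure H π l S ↔ v ∈ H.verts ∧ v ∈ ReachSet (SkelArc H π l) S :=
  Finset.mem_filter

theorem reachClosure_mono (h : S ⊆ S') : reachClosure H π l S ⊆ reachClosure H π l S' := by
  intro v hv
  obtain ⟨hvH, a, ha, hav⟩ := mem_reachClosure.mp hv
  exact mem_reachClosure.mpr ⟨hvH, a, h ha, hav⟩

theorem coe_reachClosure_subset : ↑(reachClosure H π l S) ⊆ ReachSet (SkelArc H π l) S :=
  fun _ hv => (mem_reachClosure.mp hv).2

theorem reachClosure_inter_reachSet_subset :
    ↑(reachClosure H π l S') ∩ ReachSet (SkelArc H π l) S ⊆ ↑(reachClosure H π l S) :=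
  fun _ ⟨hv, hvS⟩ => mem_reachClosure.mpr ⟨(mem_reachClosure.mp hv).1, hvS⟩

theorem subDAH_verts : (subDAH H π l S).verts = reachClosure H π l S :=
  Finset.inter_eq_right.mpr (Finset.filter_subset _ _)

theorem mem_subDAH_edges {e : Finset ℕ} :
    e ∈ (subDAH H π l S).edges ↔ e ∈ H.edges ∧ e ⊆ reachClosure H π l S ∧ e.Nonempty :=
  Hypergraph'.mem_trim_zero_edges

theorem subDAH_edges_subset_verts {e : Finset ℕ} (he : e ∈ (subDAH H π l S).edges) :
    e ⊆ (subDAH H π l S).verts :=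
  subDAH_verts ▸ (mem_subDAH_edges.mp he).2.1

theorem subDAH_eq_induce (h : S ⊆ S') :
    subDAH H π l S = (subDAH H π l S').induce (reachClosure H π l S) := by
  ext e
  · simp only [Hypergraph'.induce, subDAH_verts, Finset.inter_eq_right.mpr (reachClosure_mono h)]
  · simp only [Hypergraph'.induce, Finset.mem_filter, mem_subDAH_edges]
    constructor
    · rintro ⟨he, hsub, hne⟩
      exact ⟨⟨he, hsub.trans (reachClosure_mono h), hne⟩, hsub⟩
    · rintro ⟨⟨he, -, hne⟩, hsub⟩
      exact ⟨he, hsub, hne⟩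

theorem exists_forall_reflTransGen_of_mem_subDAH_edges (hπ : Set.InjOn π ↑H.verts)
    {e : Finset ℕ} (he : e ∈ (subDAH H π l S).edges) :
    ∃ s ∈ S, ∀ v ∈ e, Relation.ReflTransGen (SkelArc H π l) s v := by
  obtain ⟨heH, hsub, hne⟩ := mem_subDAH_edges.mp he
  -- the `π`-first vertex of `e` has an arc of the `l`-skeleton to every other vertex of `e`
  obtain ⟨u, hu, hmin⟩ := Finset.exists_min_image e π hne
  obtain ⟨-, s, hs, hsu⟩ := mem_reachClosure.mp (hsub hu)
  refine ⟨s, hs, fun v hv => hsu.trans ?_⟩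
  rcases eq_or_ne u v with rfl | huv
  · exact .refl
  have hverts {w} (hw : w ∈ e) : w ∈ H.verts := (mem_reachClosure.mp (hsub hw)).1
  have hlt : π u < π v :=
    (hmin v hv).lt_of_ne fun h => huv (hπ (hverts hu) (hverts hv) h)
  have hfirst : e.filter (fun w => π w < π u) = ∅ :=
    Finset.filter_eq_empty_iff.mpr fun w hw => (hmin w hw).not_gt
  exact .single ⟨e, heH, hu, hv, hlt, by simp [hfirst]⟩

end SubDAH

def MapsEdge (G : Hypergraph') (πK πG : ℕ → ℕ) (f : ℕ → ℕ) (e : Finset ℕ) : Prop :=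
  e.image f ∈ G.edges ∧ ∀ u ∈ e, ∀ v ∈ e, πK u < πK v → πG (f u) < πG (f v)

theorem MapsEdge.congr {G : Hypergraph'} {πK πG f g : ℕ → ℕ} {e : Finset ℕ}
    (h : MapsEdge G πK πG f e) (hfg : ∀ v ∈ e, f v = g v) : MapsEdge G πK πG g e := by
  refine ⟨Finset.image_congr hfg ▸ h.1, fun u hu v hv huv => ?_⟩
  rw [← hfg u hu, ← hfg v hv]
  exact h.2 u hu v hv huv

def extSet (K : Hypergraph') (πK : ℕ → ℕ) (G : Hypergraph') (πG : ℕ → ℕ)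
    (dom : Set ℕ) (φ : ℕ → ℕ) : Set (ℕ → ℕ) :=
  {ψ | IsDAHHom K πK G πG ψ ∧ (∀ v ∉ K.verts, ψ v = 0) ∧
    ∀ v ∈ (↑K.verts : Set ℕ) ∩ dom, ψ v = φ v}

theorem extCount_eq_ncard_extSet (K : Hypergraph') (πK : ℕ → ℕ) (G : Hypergraph') (πG : ℕ → ℕ)
    (dom : Set ℕ) (φ : ℕ → ℕ) : extCount K πK G πG dom φ = (extSet K πK G πG dom φ).ncard :=
  rfl

section Gluing

variable {K G : Hypergraph'} {πK πG : ℕ → ℕ} {D : Set ℕ} {φ : ℕ → ℕ}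

theorem extCount_inter_of_verts_subset {S : Set ℕ} (h : ↑K.verts ⊆ S) :
    extCount K πK G πG (D ∩ S) φ = extCount K πK G πG D φ := by
  have hdom : (↑K.verts : Set ℕ) ∩ (D ∩ S) = ↑K.verts ∩ D := by
    rw [Set.inter_comm D, ← Set.inter_assoc, Set.inter_eq_left.mpr h]
  simp only [extCount, hdom]

theorem indicator_mem_extSet {ψ : ℕ → ℕ} (hψ : ψ ∈ extSet K πK G πG D φ) (W : Finset ℕ) :
    (↑W : Set ℕ).indicator ψ ∈ extSet (K.induce W) πK G πG D φ := by
  obtain ⟨⟨hverts, hedges⟩, hzero, hagree⟩ := hψ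
  have hW {v} (hv : v ∈ W) : (↑W : Set ℕ).indicator ψ v = ψ v := Set.indicator_of_mem hv ψ
  refine ⟨⟨fun v hv => ?_, fun e he => ?_⟩, fun v hv => ?_, fun v ⟨hv, hvD⟩ => ?_⟩
  · obtain ⟨hvK, hvW⟩ := Finset.mem_inter.mp hv
    exact hW hvW ▸ hverts v hvK
  · obtain ⟨heK, heW⟩ := Finset.mem_filter.mp he
    exact MapsEdge.congr (hedges e heK) fun v hv => (hW (heW hv)).symm
  · by_cases hvW : v ∈ W
    · exact (hW hvW).trans (hzero v fun hvK => hv (Finset.mem_inter.mpr ⟨hvK, hvW⟩))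
    · exact Set.indicator_of_notMem hvW ψ
  · obtain ⟨hvK, hvW⟩ := Finset.mem_inter.mp hv
    exact (hW hvW).trans (hagree v ⟨hvK, hvD⟩)

variable {ι : Type*} [Fintype ι] {W : ι → Finset ℕ}

/-- Glues maps `g c` on the pieces `W c` to `φ` on `D`. Outside `D` the pieces will be
disjoint, so the sum has at most one nonzero term. -/
def glue (K : Hypergraph') (D : Set ℕ) (φ : ℕ → ℕ) (g : ι → ℕ → ℕ) (v : ℕ) : ℕ :=
  if v ∉ K.verts then 0 else if v ∈ D then φ v else ∑ c, g c v

theorem glue_of_mem_dom {g : ι → ℕ → ℕ} {v : ℕ} (hv : v ∈ K.verts) (hvD : v ∈ D) :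
    glue K D φ g v = φ v := by
  rw [glue, if_neg (not_not.mpr hv), if_pos hvD]

theorem glue_of_mem (hoverlap : Pairwise fun c c' => ↑(W c) ∩ ↑(W c') ⊆ D)
    {g : ι → ℕ → ℕ} (hg : ∀ c, g c ∈ extSet (K.induce (W c)) πK G πG D φ)
    {c : ι} {v : ℕ} (hv : v ∈ W c) : glue K D φ g v = g c v := by
  by_cases hvK : v ∈ K.verts
  · by_cases hvD : v ∈ D
    · rw [glue_of_mem_dom hvK hvD]
      exact ((hg c).2.2 v ⟨Finset.mem_inter.mpr ⟨hvK, hv⟩, hvD⟩).symm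
    · rw [glue, if_neg (not_not.mpr hvK), if_neg hvD]
      refine Finset.sum_eq_single c (fun c' _ hc' => (hg c').2.1 v fun hv' => ?_) (by simp)
      exact hvD (hoverlap hc' ⟨(Finset.mem_inter.mp hv').2, hv⟩)
  · rw [glue, if_pos hvK]
    exact ((hg c).2.1 v fun hv' => hvK (Finset.mem_inter.mp hv').1).symm

theorem glue_mem_extSet (hK : ∀ e ∈ K.edges, e ⊆ K.verts)
    (hcover : ∀ v ∈ K.verts, v ∈ D ∨ ∃ c, v ∈ W c)
    (hedges : ∀ e ∈ K.edges, ↑e ⊆ D ∨ ∃ c, e ⊆ W c)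
    (hoverlap : Pairwise fun c c' => ↑(W c) ∩ ↑(W c') ⊆ D)
    (hφv : ∀ v ∈ K.verts, v ∈ D → φ v ∈ G.verts)
    (hφe : ∀ e ∈ K.edges, ↑e ⊆ D → MapsEdge G πK πG φ e)
    {g : ι → ℕ → ℕ} (hg : ∀ c, g c ∈ extSet (K.induce (W c)) πK G πG D φ) :
    glue K D φ g ∈ extSet K πK G πG D φ := by
  refine ⟨⟨fun v hv => ?_, fun e he => ?_⟩, fun v hv => ?_, fun v ⟨hv, hvD⟩ => ?_⟩
  · rcases hcover v hv with hvD | ⟨c, hvW⟩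
    · rw [glue_of_mem_dom hv hvD]
      exact hφv v hv hvD
    · rw [glue_of_mem hoverlap hg hvW]
      exact (hg c).1.1 v (Finset.mem_inter.mpr ⟨hv, hvW⟩)
  · rcases hedges e he with heD | ⟨c, heW⟩
    · exact MapsEdge.congr (hφe e he heD) fun v hv => (glue_of_mem_dom (hK e he hv) (heD hv)).symm
    · exact MapsEdge.congr ((hg c).1.2 e (Finset.mem_filter.mpr ⟨he, heW⟩))
        fun v hv => (glue_of_mem hoverlap hg (heW hv)).symm
  · rw [glue, if_pos hv]
  · exact glue_of_mem_dom hv hvD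

theorem glue_indicator (hcover : ∀ v ∈ K.verts, v ∈ D ∨ ∃ c, v ∈ W c)
    (hoverlap : Pairwise fun c c' => ↑(W c) ∩ ↑(W c') ⊆ D)
    {ψ : ℕ → ℕ} (hψ : ψ ∈ extSet K πK G πG D φ) :
    glue K D φ (fun c => (↑(W c) : Set ℕ).indicator ψ) = ψ := by
  funext v
  by_cases hv : v ∈ K.verts
  · rcases hcover v hv with hvD | ⟨c, hvW⟩
    · exact (glue_of_mem_dom hv hvD).trans (hψ.2.2 v ⟨hv, hvD⟩).symm
    · rw [glue_of_mem hoverlap (fun c => indicator_mem_extSet hψ (W c)) hvW]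
      exact Set.indicator_of_mem hvW ψ
  · rw [glue, if_pos hv, hψ.2.1 v hv]

theorem indicator_glue (hoverlap : Pairwise fun c c' => ↑(W c) ∩ ↑(W c') ⊆ D)
    {g : ι → ℕ → ℕ} (hg : ∀ c, g c ∈ extSet (K.induce (W c)) πK G πG D φ) (c : ι) :
    (↑(W c) : Set ℕ).indicator (glue K D φ g) = g c := by
  funext v
  by_cases hvW : v ∈ W c
  · rw [Set.indicator_of_mem hvW, glue_of_mem hoverlap hg hvW]
  · rw [Set.indicator_of_notMem hvW]
    exact ((hg c).2.1 v fun hv => hvW (Finset.mem_inter.mp hv).2).symm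

theorem extCount_eq_prod_extCount_induce (hK : ∀ e ∈ K.edges, e ⊆ K.verts)
    (hcover : ∀ v ∈ K.verts, v ∈ D ∨ ∃ c, v ∈ W c)
    (hedges : ∀ e ∈ K.edges, ↑e ⊆ D ∨ ∃ c, e ⊆ W c)
    (hoverlap : Pairwise fun c c' => ↑(W c) ∩ ↑(W c') ⊆ D)
    (hφv : ∀ v ∈ K.verts, v ∈ D → φ v ∈ G.verts)
    (hφe : ∀ e ∈ K.edges, ↑e ⊆ D → MapsEdge G πK πG φ e) :
    extCount K πK G πG D φ = ∏ c, extCount (K.induce (W c)) πK G πG D φ := by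
  let restrict : extSet K πK G πG D φ ≃ ∀ c, extSet (K.induce (W c)) πK G πG D φ :=
    { toFun := fun ψ c => ⟨_, indicator_mem_extSet ψ.2 (W c)⟩
      invFun := fun g =>
        ⟨_, glue_mem_extSet hK hcover hedges hoverlap hφv hφe fun c => (g c).2⟩
      left_inv := fun ψ => Subtype.ext (glue_indicator hcover hoverlap ψ.2)
      right_inv := fun g => funext fun c =>
        Subtype.ext (indicator_glue hoverlap (fun c => (g c).2) c) }
  simp only [extCount_eq_ncard_extSet, ← Nat.card_coe_set_eq]
  exact (Nat.card_congr restrict).trans Nat.card_pi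

end Gluing

section SubDAHGamma

variable {H G : Hypergraph'} {π σ φ : ℕ → ℕ} {l : ℕ∞} {S S' : Set ℕ}

theorem IsDAHHom.mem_verts_of_mem_reachSet (hφ : IsDAHHom (subDAH H π l S) π G σ φ) {v : ℕ}
    (hv : v ∈ (subDAH H π l S').verts) (hvS : v ∈ ReachSet (SkelArc H π l) S) :
    φ v ∈ G.verts :=
  hφ.1 v (subDAH_verts ▸ reachClosure_inter_reachSet_subset ⟨subDAH_verts ▸ hv, hvS⟩)

theorem IsDAHHom.mapsEdge_of_subset_reachSet (hφ : IsDAHHom (subDAH H π l S) π G σ φ)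
    {e : Finset ℕ} (he : e ∈ (subDAH H π l S').edges)
    (heS : ↑e ⊆ ReachSet (SkelArc H π l) S) : MapsEdge G π σ φ e := by
  obtain ⟨heH, hsub, hne⟩ := mem_subDAH_edges.mp he
  exact hφ.2 e (mem_subDAH_edges.mpr
    ⟨heH, fun v hv => reachClosure_inter_reachSet_subset ⟨hsub hv, heS hv⟩, hne⟩)

variable {n : ℕ} {T : SimpleGraph (Fin n)} {root B : Fin n} {β : Fin n → Finset ℕ}

theorem subset_reachSet_or_exists_isChild (hT : T.IsTree)
    {X : Finset ℕ} (hX : X ⊆ H.verts) {s : ℕ} (hs : s ∈ GammaSet T root β B)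
    (hsX : ∀ v ∈ X, Relation.ReflTransGen (SkelArc H π l) s v) :
    ↑X ⊆ ReachSet (SkelArc H π l) ↑(β B) ∨
      ∃ c : {c // IsChild T root B c}, X ⊆ reachClosure H π l (GammaSet T root β c) := by
  rcases mem_gammaSet_cases hT hs with hs | ⟨c, hc, hs⟩
  · exact Or.inl fun v hv => ⟨s, hs, hsX v hv⟩
  · exact Or.inr ⟨⟨c, hc⟩, fun v hv => mem_reachClosure.mpr ⟨hX hv, s, hs, hsX v hv⟩⟩

theorem mem_subDAH_gammaSet_verts_cases (hT : T.IsTree) {v : ℕ}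
    (hv : v ∈ (subDAH H π l (GammaSet T root β B)).verts) :
    v ∈ ReachSet (SkelArc H π l) ↑(β B) ∨
      ∃ c : {c // IsChild T root B c}, v ∈ reachClosure H π l (GammaSet T root β c) := by
  obtain ⟨hvH, s, hs, hsv⟩ := mem_reachClosure.mp (subDAH_verts ▸ hv)
  simpa using subset_reachSet_or_exists_isChild hT (X := {v}) (by simpa) hs (by simpa)

theorem mem_subDAH_gammaSet_edges_cases (hT : T.IsTree) (hπ : Set.InjOn π ↑H.verts)
    {e : Finset ℕ} (he : e ∈ (subDAH H π l (GammaSet T root β B)).edges) :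
    ↑e ⊆ ReachSet (SkelArc H π l) ↑(β B) ∨
      ∃ c : {c // IsChild T root B c}, e ⊆ reachClosure H π l (GammaSet T root β c) := by
  obtain ⟨s, hs, hse⟩ := exists_forall_reflTransGen_of_mem_subDAH_edges hπ he
  exact subset_reachSet_or_exists_isChild hT
    (fun v hv => (mem_reachClosure.mp ((mem_subDAH_edges.mp he).2.1 hv)).1) hs hse

theorem pairwise_reachClosure_gammaSet_inter_subset (hT : IsDTD H.verts (SkelArc H π l) T β) :
    Pairwise fun c c' : {c // IsChild T root B c} =>
      ↑(reachClosure H π l (GammaSet T root β c)) ∩ ↑(reachClosure H π l (GammaSet T root β c'))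
        ⊆ ReachSet (SkelArc H π l) ↑(β B) :=
  fun c c' hne => (Set.inter_subset_inter coe_reachClosure_subset coe_reachClosure_subset).trans
    (reachSet_gammaSet_inter_subset hT c.2 c'.2 (Subtype.coe_ne_coe.mpr hne))

end SubDAHGamma

theorem stmt4_general (l : ℕ∞) (H G : Hypergraph')
    (π σ : ℕ → ℕ) (hπ : Set.InjOn π ↑H.verts)
    {n : ℕ} (T : SimpleGraph (Fin n)) (β : Fin n → Finset ℕ) (root : Fin n)
    (hT : IsDTD H.verts (SkelArc H π l) T β)
    (B : Fin n) (φ : ℕ → ℕ)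
    (hφ : IsDAHHom (subDAH H π l ↑(β B)) π G σ φ) :
    extCount (subDAH H π l (GammaSet T root β B)) π G σ
        (ReachSet (SkelArc H π l) ↑(β B)) φ =
      ∏ B' ∈ Finset.univ.filter (fun B' => IsChild T root B B'),
        extCount (subDAH H π l (GammaSet T root β B')) π G σ
          (ReachSet (SkelArc H π l) ↑(β B) ∩ ReachSet (SkelArc H π l) (GammaSet T root β B'))
          φ := by
  set D := ReachSet (SkelArc H π l) ↑(β B)
  set childCount : Fin n → ℕ := fun c => extCount (subDAH H π l (GammaSet T root β c)) π G σ
    (D ∩ ReachSet (SkelArc H π l) (GammaSet T root β c)) φ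
  calc extCount (subDAH H π l (GammaSet T root β B)) π G σ D φ
      = ∏ c : {c // IsChild T root B c}, extCount ((subDAH H π l (GammaSet T root β B)).induce
          (reachClosure H π l (GammaSet T root β c))) π G σ D φ :=
        extCount_eq_prod_extCount_induce (fun _ => subDAH_edges_subset_verts)
          (fun _ => mem_subDAH_gammaSet_verts_cases hT.1)
          (fun _ => mem_subDAH_gammaSet_edges_cases hT.1 hπ)
          (pairwise_reachClosure_gammaSet_inter_subset hT)
          (fun _ => hφ.mem_verts_of_mem_reachSet) (fun _ => hφ.mapsEdge_of_subset_reachSet)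
    _ = ∏ c : {c // IsChild T root B c}, childCount c :=
        Finset.prod_congr rfl fun c _ => by
          dsimp only [childCount]
          rw [← subDAH_eq_induce (gammaSet_subset_of_isChild hT.1 c.2),
            extCount_inter_of_verts_subset (subDAH_verts ▸ coe_reachClosure_subset)]
    _ = _ := (Finset.prod_subtype _ (fun _ => by simp) childCount).symm

theorem stmt4 (l : ℕ∞) (H G : Hypergraph') (hH : H.Good) (hG : G.Good)
    (π σ : ℕ → ℕ) (hπ : Set.InjOn π ↑H.verts) (hσ : Set.InjOn σ ↑G.verts)
    {n : ℕ} (T : SimpleGraph (Fin n)) (β : Fin n → Finset ℕ) (root : Fin n)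
    (hT : IsDTD H.verts (SkelArc H π l) T β)
    (B : Fin n) (φ : ℕ → ℕ)
    (hφ : IsDAHHom (subDAH H π l ↑(β B)) π G σ φ) :
    extCount (subDAH H π l (GammaSet T root β B)) π G σ
        (ReachSet (SkelArc H π l) ↑(β B)) φ =
      ∏ B' ∈ Finset.univ.filter (fun B' => IsChild T root B B'),
        extCount (subDAH H π l (GammaSet T root β B')) π G σ
          (ReachSet (SkelArc H π l) ↑(β B) ∩ ReachSet (SkelArc H π l) (GammaSet T root β B'))
          φ :=
  stmt4_general l H G π σ hπ T β root hT B φ hφ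

end
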